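/- arXiv:1103.1919 — 3 statements merged into one kernel-verified Lean document; each statement's English description precedes it below -/
import Mathlib

section
/- The Stieltjes transform m_sc(z) = ∫_ℝ ρ_sc(x)/(x - z) dx of the semicircle density ρ_sc(x) = (1/2π)√(max(4 - x², 0)) satisfies the quadratic equation m_sc(z) + 1/(z + m_sc(z)) = 0 for every z with Im z > 0, and it is the unique solution of this equation with positive imaginary part. -/
open MeasureTheory

/-- The semicircle density `ρ_sc(x) = (1/(2π))·√([4 - x²]₊)`. -/
noncomputable def rhoSC (x : ℝ) : ℝ := Real.sqrt (max (4 - x ^ 2) 0) / (2 * Real.pi)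

/-- The Stieltjes transform `m_sc(z) = ∫_ℝ ρ_sc(x)/(x - z) dx`. -/
noncomputable def mSC (z : ℂ) : ℂ := ∫ x : ℝ, (rhoSC x : ℂ) / ((x : ℂ) - z)

section aux

private lemma hasDerivAt_G (z s α β : ℂ) (hsum : α + β = z) (hprod : α * β = 1)
    (hα : 1 < ‖α‖) (hs : s = α - β) (hz : 0 < z.im) (θ : ℝ) :
    HasDerivAt (fun t : ℝ => (2/(Real.pi:ℂ)) * ((1 - z^2/4) *
        ((Complex.I*s)⁻¹ * (Complex.log (1 - Complex.exp ((t:ℂ)*Complex.I)/α)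
          - Complex.log (1 - β*Complex.exp (-((t:ℂ)*Complex.I))) - (t:ℂ)*Complex.I))
        - ((Real.sin t : ℂ))/2 - z*(t:ℂ)/4))
      ((2/(Real.pi:ℂ)) * (Real.sin θ:ℂ)^2 / (2*(Real.cos θ:ℂ) - z)) θ := by
  have hα0 : α ≠ 0 := by intro h; simp [h] at hα; linarith
  have hβa : ‖β‖ < 1 := by
    have h1 : ‖α‖ * ‖β‖ = 1 := by rw [← norm_mul, hprod, norm_one]
    nlinarith [norm_nonneg β]
  have hid : HasDerivAt (fun t : ℝ => (t:ℂ)*Complex.I) Complex.I θ := by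
    simpa using (Complex.ofRealCLM.hasDerivAt (x := θ)).mul_const Complex.I
  have hnid : HasDerivAt (fun t : ℝ => -((t:ℂ)*Complex.I)) (-Complex.I) θ := hid.neg
  have e1 : HasDerivAt (fun t : ℝ => Complex.exp ((t:ℂ)*Complex.I))
      (Complex.exp ((θ:ℂ)*Complex.I) * Complex.I) θ := hid.cexp
  have e2 : HasDerivAt (fun t : ℝ => Complex.exp (-((t:ℂ)*Complex.I)))
      (Complex.exp (-((θ:ℂ)*Complex.I)) * -Complex.I) θ := hnid.cexp
  set E := Complex.exp ((θ:ℂ)*Complex.I) with hE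
  set E' := Complex.exp (-((θ:ℂ)*Complex.I)) with hE'
  have hEE' : E * E' = 1 := by rw [hE, hE', ← Complex.exp_add]; simp
  have habsE : ‖E‖ = 1 := Complex.norm_exp_ofReal_mul_I θ
  have habsE' : ‖E'‖ = 1 := by
    have := norm_mul E E'
    rw [hEE', norm_one] at this; rw [habsE] at this; linarith
  have hden1 : 1 - E/α ≠ 0 := by
    intro h
    have h2 : ‖(E/α)‖ < 1 := by
      rw [norm_div, habsE]; rw [div_lt_one (by linarith)]; linarith
    have : E/α = 1 := by linear_combination -h
    rw [this] at h2; simp at h2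
  have hden2 : 1 - β*E' ≠ 0 := by
    intro h
    have h2 : ‖(β*E')‖ < 1 := by rw [norm_mul, habsE']; simpa using hβa
    have : β*E' = 1 := by linear_combination -h
    rw [this] at h2; simp at h2
  have hsl1 : 1 - E/α ∈ Complex.slitPlane := by
    refine Complex.mem_slitPlane_iff.2 (Or.inl ?_)
    have h2 : ‖(E/α)‖ < 1 := by
      rw [norm_div, habsE]; rw [div_lt_one (by linarith)]; linarith
    simp only [Complex.sub_re, Complex.one_re]
    have h3 := (Complex.re_le_norm (E/α)).trans_lt h2
    linarith
  have hsl2 : 1 - β*E' ∈ Complex.slitPlane := by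
    refine Complex.mem_slitPlane_iff.2 (Or.inl ?_)
    have h2 : ‖(β*E')‖ < 1 := by rw [norm_mul, habsE']; simpa using hβa
    simp only [Complex.sub_re, Complex.one_re]
    have h3 := (Complex.re_le_norm (β*E')).trans_lt h2
    linarith
  have L1 : HasDerivAt (fun t : ℝ => Complex.log (1 - Complex.exp ((t:ℂ)*Complex.I)/α))
      ((-(E * Complex.I / α)) / (1 - E/α)) θ :=
    HasDerivAt.clog_real ((e1.div_const α).const_sub 1) hsl1
  have L2 : HasDerivAt (fun t : ℝ => Complex.log (1 - β*Complex.exp (-((t:ℂ)*Complex.I))))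
      ((-(β * (E' * -Complex.I))) / (1 - β*E')) θ :=
    HasDerivAt.clog_real ((e2.const_mul β).const_sub 1) hsl2
  have Ls : HasDerivAt (fun t : ℝ => ((Real.sin t : ℂ))/2) ((Real.cos θ : ℂ)/2) θ :=
    (Real.hasDerivAt_sin θ).ofReal_comp.div_const 2
  have Lz : HasDerivAt (fun t : ℝ => z*(t:ℂ)/4) (z/4) θ := by
    simpa using ((Complex.ofRealCLM.hasDerivAt (x := θ)).const_mul z).div_const 4
  have main := ((((L1.sub L2).sub hid).const_mul ((Complex.I*s)⁻¹)).const_mul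
      (1 - z^2/4)).sub Ls |>.sub Lz |>.const_mul ((2:ℂ)/(Real.pi:ℂ))
  convert main using 1
  case e'_4 => rfl
  case e'_8 => rfl
  have hC : E = (Real.cos θ : ℂ) + (Real.sin θ : ℂ)*Complex.I := by
    rw [hE, Complex.exp_mul_I, Complex.ofReal_cos, Complex.ofReal_sin]
  have hC' : E' = (Real.cos θ : ℂ) - (Real.sin θ : ℂ)*Complex.I := by
    rw [hE']
    rw [show -((θ:ℂ)*Complex.I) = ((-θ:ℝ):ℂ)*Complex.I by push_cast; ring]
    rw [Complex.exp_mul_I]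
    push_cast
    rw [Complex.cos_neg, Complex.sin_neg]
    ring
  set C := (Real.cos θ : ℂ)
  set S := (Real.sin θ : ℂ)
  have pyth : S^2 + C^2 = 1 := by
    simp only [S, C, ← Complex.ofReal_pow, ← Complex.ofReal_add, ← Complex.ofReal_one,
      Complex.ofReal_inj]
    exact Real.sin_sq_add_cos_sq θ
  have hπ : (Real.pi : ℂ) ≠ 0 := by exact_mod_cast Real.pi_ne_zero
  have h2C : 2*C - z ≠ 0 := by
    intro h
    have := congrArg Complex.im h
    simp [Complex.sub_im, Complex.mul_im, C, Complex.ofReal_im] at this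
    linarith
  have hs0 : s ≠ 0 := by
    rw [hs, sub_ne_zero]; intro h; rw [h] at hα; linarith
  have hβ0 : β ≠ 0 := by intro h; simp [h] at hprod
  have hαE : α - E ≠ 0 := by
    intro h
    have hEα : α = E := by linear_combination h
    rw [hEα, habsE] at hα; linarith
  have hEβ : E - β ≠ 0 := by
    intro h
    have hEb : E = β := by linear_combination h
    rw [hEb] at habsE; rw [habsE] at hβa; linarith
  have hd1 : -(E * Complex.I / α) / (1 - E / α) = -(E*Complex.I)/(α - E) := by
    rw [div_eq_div_iff hden1 hαE]; field_simp
  have hd2 : -(β * (E' * -Complex.I)) / (1 - β * E') = β*Complex.I/(E - β) := by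
    rw [div_eq_div_iff hden2 hEβ]
    linear_combination (β*Complex.I)*hEE'
  have hsumE : E + E' = 2*C := by rw [hC, hC']; ring
  have hEEz : E + E' - z ≠ 0 := by rw [hsumE]; exact h2C
  have hB : -(E*Complex.I)/(α - E) - β*Complex.I/(E - β) - Complex.I
      = Complex.I*s/(2*C - z) := by
    rw [← hsumE]
    field_simp [hαE, hEβ, hEEz]
    linear_combination (-(α-β))*hEE' + (α-β)*hprod
      + (-(α-β)*E)*hsum + (-(α-E)*(E-β))*hs
  rw [hd1, hd2, hB]
  rw [show (Complex.I*s)⁻¹ * (Complex.I*s/(2*C - z)) = (2*C - z)⁻¹ from by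
    field_simp]
  have key : (1 - z^2/4) * (2*C - z)⁻¹ - C/2 - z/4 = S^2/(2*C-z) := by
    rw [eq_div_iff h2C]
    field_simp [h2C]
    ring_nf
    linear_combination (-8)*pyth
  rw [key]
  ring

set_option maxHeartbeats 1000000 in
private lemma mSC_eq (z : ℂ) (hz : 0 < z.im) (α β : ℂ) (hsum : α + β = z)
    (hprod : α * β = 1) (hα : 1 < ‖α‖) : mSC z = -β := by
  have hπ : (0:ℝ) < Real.pi := Real.pi_pos
  have hπC : (Real.pi : ℂ) ≠ 0 := by exact_mod_cast Real.pi_ne_zero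
  have hα0 : α ≠ 0 := by intro h; simp [h] at hα; linarith
  have hs0 : (α - β) ≠ 0 := by
    rw [sub_ne_zero]; intro h
    have hβa : ‖β‖ < 1 := by
      have h1 : ‖α‖ * ‖β‖ = 1 := by rw [← norm_mul, hprod, norm_one]
      nlinarith [norm_nonneg β]
    rw [h] at hα; linarith
  have hzden : ∀ x : ℝ, (x:ℂ) - z ≠ 0 := by
    intro x h
    have := congrArg Complex.im h
    simp [Complex.sub_im, Complex.ofReal_im] at this
    linarith
  have h2Cden : ∀ t : ℝ, 2*(Real.cos t:ℂ) - z ≠ 0 := by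
    intro t h
    have := congrArg Complex.im h
    simp [Complex.sub_im, Complex.mul_im, Complex.ofReal_im] at this
    linarith
  have hrhoc : Continuous rhoSC := by
    unfold rhoSC
    exact (Real.continuous_sqrt.comp
      ((continuous_const.sub (continuous_pow 2)).max continuous_const)).div_const _
  have hgc : Continuous (fun x : ℝ => (rhoSC x : ℂ) / ((x:ℂ) - z)) := by
    exact (Complex.continuous_ofReal.comp hrhoc).div
      (Complex.continuous_ofReal.sub continuous_const) hzden
  have hsupp : ∀ x : ℝ, x ∉ Set.Ioc (-2:ℝ) 2 → (rhoSC x : ℂ) / ((x:ℂ) - z) = 0 := by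
    intro x hx
    have hx2 : 4 - x^2 ≤ 0 := by
      simp only [Set.mem_Ioc, not_and_or, not_lt, not_le] at hx
      rcases hx with h | h
      · nlinarith
      · nlinarith
    have hr : rhoSC x = 0 := by
      unfold rhoSC
      rw [max_eq_right hx2, Real.sqrt_zero, zero_div]
    rw [hr]; simp
  have h1 : mSC z = ∫ x in (-2:ℝ)..2, (rhoSC x : ℂ)/((x:ℂ)-z) := by
    rw [mSC, ← MeasureTheory.setIntegral_eq_integral_of_forall_compl_eq_zero hsupp,
      intervalIntegral.integral_of_le (by norm_num : (-2:ℝ) ≤ 2)]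
  have h2 : ∀ x ∈ Set.uIcc (0:ℝ) Real.pi,
      HasDerivAt (fun t => 2*Real.cos t) (-2*Real.sin x) x := by
    intro x _
    have := (Real.hasDerivAt_cos x).const_mul 2
    simpa [mul_comm] using this
  have h3 := intervalIntegral.integral_comp_smul_deriv h2
    ((continuous_const.mul Real.continuous_sin).continuousOn) hgc
  rw [Real.cos_zero, Real.cos_pi] at h3
  rw [show (2:ℝ)*1 = 2 by norm_num, show (2:ℝ)*(-1) = -2 by norm_num] at h3
  -- h3 : ∫ t in 0..π, (-2*sin t) • g (2 cos t) = ∫ x in 2..(-2), g x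
  have h4 : mSC z = ∫ t in (0:ℝ)..Real.pi,
      -((-2*Real.sin t) • ((rhoSC (2*Real.cos t) : ℂ)/(((2*Real.cos t : ℝ):ℂ) - z))) := by
    rw [h1, intervalIntegral.integral_symm (a := 2) (b := -2), ← h3,
      ← intervalIntegral.integral_neg]
    rfl
  have h5 : Set.EqOn
      (fun t : ℝ => -((-2*Real.sin t) • ((rhoSC (2*Real.cos t) : ℂ)/(((2*Real.cos t : ℝ):ℂ) - z))))
      (fun t : ℝ => (2/(Real.pi:ℂ)) * (Real.sin t:ℂ)^2 / (2*(Real.cos t:ℂ) - z))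
      (Set.uIcc (0:ℝ) Real.pi) := by
    intro t ht
    rw [Set.uIcc_of_le hπ.le, Set.mem_Icc] at ht
    have hsin : 0 ≤ Real.sin t := Real.sin_nonneg_of_nonneg_of_le_pi ht.1 ht.2
    have hrho : rhoSC (2*Real.cos t) = Real.sin t/Real.pi := by
      unfold rhoSC
      have hmax : max (4 - (2*Real.cos t)^2) 0 = (2*Real.sin t)^2 := by
        rw [max_eq_left (by nlinarith [Real.sin_sq_add_cos_sq t])]
        nlinarith [Real.sin_sq_add_cos_sq t]
      rw [hmax, Real.sqrt_sq (by linarith)]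
      rw [div_eq_div_iff (by positivity) (by positivity)]
      ring
    simp only [hrho, Complex.real_smul]
    push_cast
    have hden : 2*Complex.cos (t:ℂ) - z ≠ 0 := by
      rw [← Complex.ofReal_cos]; exact h2Cden t
    field_simp
  rw [intervalIntegral.integral_congr h5] at h4
  have hderiv : ∀ t ∈ Set.uIcc (0:ℝ) Real.pi,
      HasDerivAt (fun t : ℝ => (2/(Real.pi:ℂ)) * ((1 - z^2/4) *
        ((Complex.I*(α-β))⁻¹ * (Complex.log (1 - Complex.exp ((t:ℂ)*Complex.I)/α)
          - Complex.log (1 - β*Complex.exp (-((t:ℂ)*Complex.I))) - (t:ℂ)*Complex.I))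
        - ((Real.sin t : ℂ))/2 - z*(t:ℂ)/4))
      ((2/(Real.pi:ℂ)) * (Real.sin t:ℂ)^2 / (2*(Real.cos t:ℂ) - z)) t :=
    fun t _ => hasDerivAt_G z (α-β) α β hsum hprod hα rfl hz t
  have hint : IntervalIntegrable
      (fun t : ℝ => (2/(Real.pi:ℂ)) * (Real.sin t:ℂ)^2 / (2*(Real.cos t:ℂ) - z))
      volume 0 Real.pi := by
    apply Continuous.intervalIntegrable
    exact Continuous.div
      (continuous_const.mul ((Complex.continuous_ofReal.comp Real.continuous_sin).pow 2))
      ((continuous_const.mul (Complex.continuous_ofReal.comp Real.continuous_cos)).sub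
        continuous_const) h2Cden
  have h6 := intervalIntegral.integral_eq_sub_of_hasDerivAt hderiv hint
  rw [h4, h6]
  -- evaluate endpoints
  have hβinv : (1:ℂ)/α = β := by
    rw [eq_comm, eq_div_iff hα0]; linear_combination hprod
  have hexp0 : Complex.exp (((0:ℝ):ℂ)*Complex.I) = 1 := by norm_num
  have hexppi : Complex.exp (((Real.pi:ℝ):ℂ)*Complex.I) = -1 := Complex.exp_pi_mul_I
  have hexppi' : Complex.exp (-(((Real.pi:ℝ):ℂ)*Complex.I)) = -1 := by
    rw [Complex.exp_neg, hexppi]; norm_num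
  simp only [hexppi, hexppi', Real.sin_zero, Real.sin_pi, Complex.ofReal_zero, zero_mul,
    mul_zero, neg_zero, Complex.exp_zero, mul_one, zero_div, sub_zero]
  rw [show (1:ℂ) - (-1)/α = 1 + β by rw [← hβinv]; ring,
      show (1:ℂ) - β*(-1) = 1 + β by ring,
      show (1:ℂ) - 1/α = 1 - β by rw [hβinv]]
  simp only [sub_self, zero_sub, mul_neg, mul_zero, zero_div, sub_zero, zero_mul, mul_one]
  rw [show (Complex.I*(α-β))⁻¹ * ((Real.pi:ℂ) * Complex.I) = (Real.pi:ℂ)/(α-β) from by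
    rw [eq_div_iff hs0]; field_simp; try ring]
  field_simp
  ring_nf
  linear_combination 8*hprod
    + (-(2*z + 4*β))*hsum

end aux

/-- `m_sc` satisfies `m_sc(z) + 1/(z + m_sc(z)) = 0` for `Im z > 0`, has positive
imaginary part, and is the unique solution of this equation with positive imaginary part. -/
theorem stmt_0 (z : ℂ) (hz : 0 < z.im) :
    mSC z + 1 / (z + mSC z) = 0 ∧ 0 < (mSC z).im ∧
      ∀ w : ℂ, w + 1 / (z + w) = 0 → 0 < w.im → w = mSC z := by
  obtain ⟨r, hr⟩ := IsAlgClosed.exists_pow_nat_eq (z^2 - 4) (n := 2) (by norm_num)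
  -- roots of X^2 - zX + 1
  have habs : ∀ α β : ℂ, α + β = z → α * β = 1 → ‖α‖ ≠ 1 := by
    intro α β hsum hprod h1
    have hα0 : α ≠ 0 := by intro h; simp [h] at hprod
    have hβ : β = α⁻¹ := by field_simp; linear_combination hprod
    have hconj : α⁻¹ = (starRingEnd ℂ) α := by
      rw [Complex.inv_def, Complex.normSq_eq_norm_sq, h1]
      norm_num
    have : z.im = 0 := by
      rw [← hsum, hβ, hconj]
      simp [Complex.add_im, Complex.conj_im]
    linarith
  obtain ⟨α, β, hsum, hprod, hα⟩ :
      ∃ α β : ℂ, α + β = z ∧ α * β = 1 ∧ 1 < ‖α‖ := by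
    set α' := (z + r)/2
    set β' := (z - r)/2
    have hsum' : α' + β' = z := by simp only [α', β']; ring
    have hprod' : α' * β' = 1 := by
      simp only [α', β']
      linear_combination (-1/4 : ℂ)*hr
    rcases lt_or_ge 1 (‖α'‖) with h | h
    · exact ⟨α', β', hsum', hprod', h⟩
    · refine ⟨β', α', by rw [← hsum']; ring, by rw [← hprod']; ring, ?_⟩
      have hne : ‖α'‖ ≠ 1 := habs α' β' hsum' hprod'
      have hα0 : α' ≠ 0 := by intro hh; simp [hh] at hprod'
      have h1 : ‖α'‖ * ‖β'‖ = 1 := by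
        rw [← norm_mul, hprod', norm_one]
      have hpos : 0 < ‖α'‖ := by
        simpa [norm_pos_iff] using hα0
      have hlt : ‖α'‖ < 1 := lt_of_le_of_ne h hne
      nlinarith
  have hm : mSC z = -β := mSC_eq z hz α β hsum hprod hα
  have hβ0 : β ≠ 0 := by intro h; simp [h] at hprod
  have hβa : ‖β‖ < 1 := by
    have h1 : ‖α‖ * ‖β‖ = 1 := by rw [← norm_mul, hprod, norm_one]
    nlinarith [norm_nonneg β]
  have hβim : β.im < 0 := by
    have hαinv : α = β⁻¹ := by field_simp; linear_combination hprod
    have hzim : z.im = -β.im/Complex.normSq β + β.im := by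
      rw [← hsum, hαinv, Complex.add_im, Complex.inv_im]
    have hn0 : 0 < Complex.normSq β := Complex.normSq_pos.2 hβ0
    have hn1 : Complex.normSq β < 1 := by
      rw [Complex.normSq_eq_norm_sq]; nlinarith [norm_nonneg β]
    have key : z.im * Complex.normSq β = β.im * (Complex.normSq β - 1) := by
      rw [hzim]; field_simp; ring
    nlinarith [key, mul_pos hz hn0]
  have hmim : 0 < (mSC z).im := by rw [hm]; simpa using hβim
  have hzm : z + mSC z = α := by rw [hm, ← hsum]; ring
  have hα0 : α ≠ 0 := by intro h; simp [h] at hprod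
  have hβα : (1:ℂ)/α = β := by rw [eq_comm, eq_div_iff hα0]; linear_combination hprod
  have heq : mSC z + 1 / (z + mSC z) = 0 := by
    rw [hzm, hm, hβα]
    ring
  refine ⟨heq, hmim, ?_⟩
  intro w hw hwim
  have hzw : z + w ≠ 0 := by
    intro h
    rw [h, div_zero, add_zero] at hw
    rw [hw] at hwim
    simp at hwim
  have hw' : w^2 + z*w + 1 = 0 := by
    have := congrArg (fun u => u * (z + w)) hw
    simp only [add_mul, zero_mul, one_div, inv_mul_cancel₀ hzw] at this
    linear_combination this
  have hm' : (mSC z)^2 + z*(mSC z) + 1 = 0 := by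
    rw [hm, ← hsum]
    linear_combination -hprod
  have hfac : (w - mSC z) * (w + mSC z + z) = 0 := by
    linear_combination hw' - hm'
  rcases mul_eq_zero.1 hfac with h | h
  · exact sub_eq_zero.1 h
  · exfalso
    have := congrArg Complex.im h
    simp only [Complex.add_im, Complex.zero_im] at this
    linarith
end

section
/- Let z = E + iη with |E| ≤ Σ (Σ ≥ 3 fixed) and 0 < η ≤ 3, and let κ := ||E| − 2|. Then the semicircle Stieltjes transform satisfies c ≤ |m_sc(z)| ≤ 1 and c·√(κ+η) ≤ |1 − m_sc(z)²| ≤ C·√(κ+η) for constants c, C > 0 depending only on Σ. -/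
open MeasureTheory

namespace Stmt13Aux
open Complex


lemma alg_id (z r e e' : ℂ) (hee' : e * e' = 1) (hroot : r^2 + z*r + 1 = 0)
    (h1 : 1 + r * e ≠ 0) (h2 : 1 + r * e' ≠ 0) (hd : e + e' - z ≠ 0)
    (hr2 : (1:ℂ) - r^2 ≠ 0) :
    -2 * ((e + e')/2) - z + (4 - z^2) * r / (1 - r^2) *
      (1 + I * ((r * (I * e)) / (1 + r * e)) - I * ((r * (-I * e')) / (1 + r * e')))
    = 4 * (((e' - e) * I / 2)^2) / (e + e' - z) := by
  have hrne : r ≠ 0 := by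
    intro h; rw [h] at hroot; simp at hroot
  have e1 : I * ((r * (I * e)) / (1 + r * e)) = -(r * e / (1 + r * e)) := by
    field_simp
    linear_combination e * Complex.I_sq
  have e2 : I * ((r * (-I * e')) / (1 + r * e')) = r * e' / (1 + r * e') := by
    field_simp
    linear_combination (-e') * Complex.I_sq
  rw [e1, e2]
  have hb : (1:ℂ) + -(r * e / (1 + r * e)) - r * e' / (1 + r * e')
      = (1 - r^2) / (r * (e + e' - z)) := by
    have hc : (1 + r*e) * (1 + r*e') = r * (e + e' - z) := by
      linear_combination r^2 * hee' + hroot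
    rw [← hc]
    field_simp
    linear_combination (-r^2 : ℂ) * hee'
  rw [hb]
  have hk : (4 - z^2) * r / (1 - r^2) * ((1 - r^2) / (r * (e + e' - z)))
      = (4 - z^2) / (e + e' - z) := by
    field_simp
  rw [hk]
  have hq : 4 * (((e' - e) * I / 2)^2) = 4 - (e+e')^2 := by
    linear_combination (4:ℂ) * hee' + (e'-e)^2 * Complex.I_sq
  rw [hq]
  field_simp
  ring

lemma abs_re_pos (w : ℂ) (hw : ‖w‖ < 1) : (1 + w) ∈ Complex.slitPlane := by
  left
  have h1 : |w.re| ≤ ‖w‖ := Complex.abs_re_le_norm w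
  have h2 : (1 + w).re = 1 + w.re := by simp
  rw [h2]
  rcases abs_le.mp h1 with ⟨h, _⟩
  linarith

lemma one_add_ne (w : ℂ) (hw : ‖w‖ < 1) : (1 + w) ≠ 0 :=
  Complex.slitPlane_ne_zero (abs_re_pos w hw)

noncomputable def Hfun (z r : ℂ) (t : ℝ) : ℂ :=
  -2 * (Real.sin t : ℂ) - z * t + (4 - z^2) * r / (1 - r^2) *
    ((t : ℂ) + I * Complex.log (1 + r * Complex.exp ((t:ℂ) * I))
       - I * Complex.log (1 + r * Complex.exp (-(t:ℂ) * I)))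

lemma key_integral (z r : ℂ) (hz : z.im ≠ 0) (hroot : r^2 + z*r + 1 = 0)
    (hr : ‖r‖ < 1) :
    ∫ θ in (0:ℝ)..Real.pi, 4 * (Real.sin θ : ℂ)^2 / (2 * (Real.cos θ : ℂ) - z)
      = 2 * Real.pi * r := by
  have habs : ∀ t : ℝ, ‖r * Complex.exp ((t:ℂ) * I)‖ < 1 := by
    intro t
    rw [norm_mul, Complex.norm_exp_ofReal_mul_I, mul_one]
    exact hr
  have habs' : ∀ t : ℝ, ‖r * Complex.exp (-(t:ℂ) * I)‖ < 1 := by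
    intro t
    have : (-(t:ℂ) * I) = ((-t : ℝ) : ℂ) * I := by push_cast; ring
    rw [this, norm_mul, Complex.norm_exp_ofReal_mul_I, mul_one]
    exact hr
  have hr2 : (1:ℂ) - r^2 ≠ 0 := by
    intro h
    have h' : r^2 = 1 := by linear_combination -h
    have h2 := congrArg (‖·‖) h'
    rw [norm_pow, norm_one] at h2
    nlinarith [norm_nonneg r]
  have hdne : ∀ θ : ℝ, 2 * (Real.cos θ : ℂ) - z ≠ 0 := by
    intro θ h
    have := congrArg Complex.im h
    simp at this
    exact hz this
  have hcont : Continuous fun θ : ℝ => 4 * (Real.sin θ : ℂ)^2 / (2 * (Real.cos θ : ℂ) - z) := by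
    apply Continuous.div
    · continuity
    · continuity
    · exact hdne
  have hderiv : ∀ θ ∈ Set.uIcc (0:ℝ) Real.pi, HasDerivAt (Hfun z r)
      (4 * (Real.sin θ : ℂ)^2 / (2 * (Real.cos θ : ℂ) - z)) θ := by
    intro θ _
    set e := Complex.exp ((θ:ℂ) * I) with hedef
    set e' := Complex.exp (-(θ:ℂ) * I) with he'def
    have hee' : e * e' = 1 := by
      rw [hedef, he'def, ← Complex.exp_add]
      rw [show ((θ:ℂ) * I + -(θ:ℂ) * I) = 0 by ring, Complex.exp_zero]
    have he : HasDerivAt (fun t : ℝ => Complex.exp ((t:ℂ) * I)) (e * I) θ := by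
      have h0 : HasDerivAt (fun t : ℝ => ((t:ℂ) * I)) I θ := by
        simpa using (hasDerivAt_id θ).ofReal_comp.mul_const I
      exact h0.cexp
    have he' : HasDerivAt (fun t : ℝ => Complex.exp (-(t:ℂ) * I)) (e' * -I) θ := by
      have h0 : HasDerivAt (fun t : ℝ => (-(t:ℂ) * I)) (-I) θ := by
        have := ((hasDerivAt_id θ).ofReal_comp.neg.mul_const I)
        simpa using this
      exact h0.cexp
    have hl1 : HasDerivAt (fun t : ℝ => Complex.log (1 + r * Complex.exp ((t:ℂ) * I)))
        ((r * (e * I)) / (1 + r * e)) θ :=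
      ((he.const_mul r).const_add 1).clog_real (abs_re_pos _ (habs θ))
    have hl2 : HasDerivAt (fun t : ℝ => Complex.log (1 + r * Complex.exp (-(t:ℂ) * I)))
        ((r * (e' * -I)) / (1 + r * e')) θ :=
      ((he'.const_mul r).const_add 1).clog_real (abs_re_pos _ (habs' θ))
    have hid : HasDerivAt (fun t : ℝ => ((t:ℂ))) 1 θ := (hasDerivAt_id θ).ofReal_comp
    have hsin : HasDerivAt (fun t : ℝ => -2 * (Real.sin t : ℂ))
        (-2 * (Real.cos θ : ℂ)) θ := (Real.hasDerivAt_sin θ).ofReal_comp.const_mul (-2)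
    have hzt : HasDerivAt (fun t : ℝ => z * ((t:ℂ))) (z * 1) θ := hid.const_mul z
    have main := (hsin.sub hzt).add
      (((hid.add (hl1.const_mul I)).sub (hl2.const_mul I)).const_mul ((4 - z^2) * r / (1 - r^2)))
    have halg := alg_id z r e e' hee' hroot (one_add_ne _ (habs θ)) (one_add_ne _ (habs' θ))
      (by rw [show e + e' - z = 2 * ((e + e')/2) - z by ring,
            show (e + e')/2 = (Real.cos θ : ℂ) by
              rw [Complex.ofReal_cos, Complex.cos]]
          exact hdne θ) hr2
    have hval : -2 * (Real.cos θ : ℂ) - z * 1 +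
        (4 - z^2) * r / (1 - r^2) * (1 + I * ((r * (e * I)) / (1 + r * e))
          - I * ((r * (e' * -I)) / (1 + r * e')))
        = 4 * (Real.sin θ : ℂ)^2 / (2 * (Real.cos θ : ℂ) - z) := by
      rw [Complex.ofReal_sin, Complex.ofReal_cos, Complex.sin, Complex.cos]
      linear_combination halg
    rw [← hval]
    exact main
  have hint := intervalIntegral.integral_eq_sub_of_hasDerivAt hderiv
    (hcont.intervalIntegrable 0 Real.pi)
  rw [hint]
  have hK : (4 - z^2) * r / (1 - r^2) = z + 2*r := by
    rw [div_eq_iff hr2]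
    linear_combination (2*r - z) * hroot
  have hexp1 : Complex.exp ((Real.pi:ℂ) * I) = -1 := Complex.exp_pi_mul_I
  have hexp2 : Complex.exp (-(Real.pi:ℂ) * I) = -1 := by
    rw [show (-(Real.pi:ℂ) * I) = -((Real.pi:ℂ) * I) by ring, Complex.exp_neg, hexp1]
    norm_num
  simp only [Hfun, hK, hexp1, hexp2, Complex.ofReal_zero, mul_zero, zero_mul, neg_zero,
    Complex.exp_zero, Real.sin_zero, Real.sin_pi, mul_one]
  push_cast
  ring

lemma mSC_eq (z r : ℂ) (hz : z.im ≠ 0) (hroot : r^2 + z*r + 1 = 0)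
    (hr : ‖r‖ < 1) : mSC z = r := by
  set g : ℝ → ℂ := fun x => (Real.sqrt (max (4 - x^2) 0) : ℂ) / ((x:ℂ) - z) with hgdef
  have hxz : ∀ x : ℝ, (x:ℂ) - z ≠ 0 := by
    intro x h
    have := congrArg Complex.im h
    simp at this
    exact hz this
  have hgcont : Continuous g := by
    apply Continuous.div
    · exact Complex.continuous_ofReal.comp
        (Real.continuous_sqrt.comp ((continuous_const.sub (continuous_pow 2)).max continuous_const))
    · exact (Complex.continuous_ofReal).sub continuous_const
    · exact hxz
  -- mSC z = (2π)⁻¹ * ∫ g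
  have step1 : mSC z = (2 * Real.pi : ℂ)⁻¹ * ∫ x : ℝ, g x := by
    rw [mSC, ← MeasureTheory.integral_const_mul]
    congr 1
    funext x
    rw [hgdef]
    simp only [rhoSC]
    push_cast
    ring
  -- ∫ g over ℝ equals interval integral
  have step2 : (∫ x : ℝ, g x) = ∫ x in (-2:ℝ)..2, g x := by
    rw [intervalIntegral.integral_of_le (by norm_num : (-2:ℝ) ≤ 2)]
    symm
    apply MeasureTheory.setIntegral_eq_integral_of_forall_compl_eq_zero
    intro x hx
    have : max (4 - x^2) 0 = 0 := by
      rcases (not_and_or.mp (fun h => hx ⟨h.1, h.2⟩) : ¬ (-2 < x) ∨ ¬ (x ≤ 2)) with h | h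
      · push_neg at h
        apply max_eq_right
        nlinarith
      · push_neg at h
        apply max_eq_right
        nlinarith
    rw [hgdef]
    simp [this]
  -- substitution x = 2 cos θ
  have step3 : (∫ x in (-2:ℝ)..2, g x)
      = ∫ θ in (0:ℝ)..Real.pi, 4 * (Real.sin θ : ℂ)^2 / (2 * (Real.cos θ : ℂ) - z) := by
    have hsub := intervalIntegral.integral_comp_smul_deriv
      (f := fun θ : ℝ => 2 * Real.cos θ) (f' := fun θ : ℝ => -2 * Real.sin θ)
      (g := g) (a := 0) (b := Real.pi)
      (fun θ _ => by simpa [mul_comm] using (Real.hasDerivAt_cos θ).const_mul 2)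
      ((continuous_const.mul Real.continuous_sin).continuousOn) hgcont
    simp only [Real.cos_zero, Real.cos_pi, mul_one] at hsub
    have h2 : (2 : ℝ) * -1 = -2 := by norm_num
    rw [h2] at hsub
    rw [intervalIntegral.integral_symm 2 (-2), ← hsub, ← intervalIntegral.integral_neg]
    apply intervalIntegral.integral_congr
    intro θ hθ
    rw [Set.uIcc_of_le Real.pi_nonneg] at hθ
    have hsin : Real.sin θ ≥ 0 := Real.sin_nonneg_of_nonneg_of_le_pi hθ.1 hθ.2
    have hmax : max (4 - (2 * Real.cos θ)^2) 0 = (2 * Real.sin θ)^2 := by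
      rw [max_eq_left]
      · nlinarith [Real.sin_sq_add_cos_sq θ]
      · nlinarith [Real.sin_sq_add_cos_sq θ]
    have hsqrt : Real.sqrt (max (4 - (2 * Real.cos θ)^2) 0) = 2 * Real.sin θ := by
      rw [hmax, Real.sqrt_sq (by linarith)]
    simp only [hgdef, Function.comp_apply]
    rw [hsqrt]
    push_cast
    rw [Complex.real_smul]
    push_cast
    field_simp
    ring
  rw [step1, step2, step3, key_integral z r hz hroot hr]
  have hpi : (2 * Real.pi : ℂ) ≠ 0 := by
    simp [Real.pi_ne_zero]
  field_simp


lemma no_unit_root (z r : ℂ) (hroot : r^2 + z*r + 1 = 0) (h1 : ‖r‖ = 1) :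
    z.im = 0 := by
  have hr0 : r ≠ 0 := by
    intro h; rw [h] at h1; simp at h1
  have hinv : r⁻¹ = starRingEnd ℂ r := by
    rw [Complex.inv_def, Complex.normSq_eq_norm_sq, h1]
    simp
  have hzeq : z = -r - r⁻¹ := by
    field_simp
    linear_combination hroot
  rw [hzeq, hinv]
  simp

lemma exists_root (z : ℂ) (hz : 0 < z.im) :
    ∃ r : ℂ, r^2 + z*r + 1 = 0 ∧ ‖r‖ < 1 := by
  obtain ⟨s, hs⟩ := IsAlgClosed.exists_pow_nat_eq (z^2 - 4) (n := 2) (by norm_num)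
  set r1 := (-z + s)/2 with hr1
  set r2 := (-z - s)/2 with hr2
  have hroot1 : r1^2 + z*r1 + 1 = 0 := by
    rw [hr1]; linear_combination hs/4
  have hroot2 : r2^2 + z*r2 + 1 = 0 := by
    rw [hr2]; linear_combination hs/4
  have hprod : r1 * r2 = 1 := by
    rw [hr1, hr2]; linear_combination -hs/4
  have habs : ‖r1‖ * ‖r2‖ = 1 := by
    rw [← norm_mul, hprod, norm_one]
  have hne1 : ‖r1‖ ≠ 1 := fun h => by
    have := no_unit_root z r1 hroot1 h; linarith
  have hne2 : ‖r2‖ ≠ 1 := fun h => by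
    have := no_unit_root z r2 hroot2 h; linarith
  rcases lt_or_gt_of_ne hne1 with h | h
  · exact ⟨r1, hroot1, h⟩
  · refine ⟨r2, hroot2, ?_⟩
    nlinarith [norm_nonneg r2]

lemma prod_bounds (a b κ η Sig : ℝ) (hb0 : 0 ≤ b) (hκ0 : 0 ≤ κ) (hη : 0 < η)
    (ha : a^2 = κ^2 + η^2) (ha0 : 0 ≤ a) (hb4 : 4 ≤ b^2) (hbS : b^2 ≤ (Sig+5)^2)
    (hSig : 3 ≤ Sig) :
    κ + η ≤ a * b ∧ a * b ≤ (Sig+5) * (κ+η) := by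
  have hb2 : 2 ≤ b := by nlinarith
  have hbS' : b ≤ Sig + 5 := by nlinarith
  have halow : (κ + η)/2 ≤ a := by nlinarith [sq_nonneg (κ - η), sq_nonneg (a + (κ + η)/2)]
  have haup : a ≤ κ + η := by nlinarith
  constructor
  · nlinarith
  · nlinarith

set_option maxHeartbeats 1000000 in
theorem main_bounds (Sig : ℝ) (hSig : 3 ≤ Sig) (E η : ℝ) (hE : |E| ≤ Sig)
    (hη : 0 < η) (hη3 : η ≤ 3) :
    (Sig+4)⁻¹ ≤ ‖mSC (E + η * Complex.I)‖ ∧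
    ‖mSC (E + η * Complex.I)‖ ≤ 1 ∧
    (Sig+4)⁻¹ * Real.sqrt (|(|E| - 2)| + η)
        ≤ ‖1 - (mSC (E + η * Complex.I)) ^ 2‖ ∧
    ‖1 - (mSC (E + η * Complex.I)) ^ 2‖
        ≤ (Sig+5) * Real.sqrt (|(|E| - 2)| + η) := by
  set z : ℂ := (E : ℂ) + (η : ℂ) * Complex.I with hzdef
  have hzim : z.im = η := by simp [hzdef]
  obtain ⟨r, hroot, hrabs⟩ := exists_root z (by rw [hzim]; exact hη)
  have hm : mSC z = r := mSC_eq z r (by rw [hzim]; exact ne_of_gt hη) hroot hrabs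
  rw [hm]
  have hr0 : (0:ℝ) ≤ ‖r‖ := norm_nonneg r
  have habsz : ‖z‖ ≤ Sig + 3 := by
    calc ‖z‖ ≤ ‖(E:ℂ)‖ + ‖(η:ℂ) * Complex.I‖ :=
          norm_add_le _ _
    _ = |E| + |η| := by simp
    _ ≤ Sig + 3 := by rw [abs_of_pos hη]; linarith
  have hrzr : r * (z + r) = -1 := by linear_combination hroot
  have habs1 : ‖r‖ * ‖z + r‖ = 1 := by
    rw [← norm_mul, hrzr]; simp
  have hSig4 : (0:ℝ) < Sig + 4 := by linarith
  have hlowr : (Sig+4)⁻¹ ≤ ‖r‖ := by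
    have h4 : ‖z + r‖ ≤ Sig + 4 :=
      le_trans (norm_add_le _ _) (by linarith)
    rw [inv_eq_one_div, div_le_iff₀ hSig4]
    nlinarith [norm_nonneg (z + r)]
  have hfac : 1 - r^2 = -(r * (z + 2*r)) := by linear_combination hroot
  have habs2 : (‖1 - r^2‖)^2
      = (‖r‖)^2 * (‖z-2‖ * ‖z+2‖) := by
    calc (‖1 - r^2‖)^2 = (‖r‖)^2 * (‖z + 2*r‖)^2 := by
          rw [hfac, norm_neg, norm_mul]; ring
    _ = (‖r‖)^2 * ‖(z + 2*r)^2‖ := by rw [norm_pow]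
    _ = (‖r‖)^2 * ‖(z-2)*(z+2)‖ := by
          rw [show (z + 2*r)^2 = (z-2)*(z+2) by linear_combination 4*hroot]
    _ = (‖r‖)^2 * (‖z-2‖ * ‖z+2‖) := by
          rw [norm_mul]
  set a := ‖z - 2‖ with hadef
  set b := ‖z + 2‖ with hbdef
  have ha0 : 0 ≤ a := norm_nonneg _
  have hb0 : 0 ≤ b := norm_nonneg _
  have ha2 : a^2 = (E-2)^2 + η^2 := by
    rw [hadef, Complex.sq_norm, Complex.normSq_apply, hzdef]
    simp
    ring
  have hb2 : b^2 = (E+2)^2 + η^2 := by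
    rw [hbdef, Complex.sq_norm, Complex.normSq_apply, hzdef]
    simp
    ring
  set κ := |(|E| - 2)| with hκdef
  have hκ0 : 0 ≤ κ := abs_nonneg _
  have hκsq : κ^2 = (|E| - 2)^2 := sq_abs _
  have hEabs : 0 ≤ |E| := abs_nonneg E
  have hprod : κ + η ≤ a * b ∧ a * b ≤ (Sig+5) * (κ+η) := by
    rcases le_or_gt 0 E with hE0 | hE0
    · have hEE : |E| = E := abs_of_nonneg hE0
      refine prod_bounds a b κ η Sig hb0 hκ0 hη ?_ ha0 ?_ ?_ hSig
      · rw [ha2, hκsq, hEE]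
      · rw [hb2]; nlinarith
      · rw [hb2]; nlinarith [abs_le.mp hE]
    · have hEE : |E| = -E := abs_of_neg hE0
      rw [show a * b = b * a by ring]
      refine prod_bounds b a κ η Sig ha0 hκ0 hη ?_ hb0 ?_ ?_ hSig
      · rw [hb2, hκsq, hEE]; ring
      · rw [ha2]; nlinarith
      · rw [ha2]; nlinarith [abs_le.mp hE]
  set s := Real.sqrt (κ + η) with hsdef
  have hs0 : 0 ≤ s := Real.sqrt_nonneg _
  have hs2 : s^2 = κ + η := Real.sq_sqrt (by linarith)
  have hX0 : 0 ≤ ‖1 - r^2‖ := norm_nonneg _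
  have hc0 : (0:ℝ) ≤ (Sig+4)⁻¹ := inv_nonneg.mpr hSig4.le
  refine ⟨hlowr, le_of_lt hrabs, ?_, ?_⟩
  · -- lower bound
    apply le_of_pow_le_pow_left₀ two_ne_zero hX0
    have h1 : ((Sig+4)⁻¹)^2 * (κ+η) ≤ (‖r‖)^2 * (κ+η) :=
      mul_le_mul_of_nonneg_right (pow_le_pow_left₀ hc0 hlowr 2) (by linarith)
    have h2 : (‖r‖)^2 * (κ+η) ≤ (‖r‖)^2 * (a*b) :=
      mul_le_mul_of_nonneg_left hprod.1 (by positivity)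
    calc ((Sig+4)⁻¹ * s)^2 = ((Sig+4)⁻¹)^2 * (κ+η) := by rw [mul_pow, hs2]
    _ ≤ (‖r‖)^2 * (a*b) := le_trans h1 h2
    _ = (‖1 - r^2‖)^2 := habs2.symm
  · -- upper bound
    apply le_of_pow_le_pow_left₀ two_ne_zero (by positivity : (0:ℝ) ≤ (Sig+5)*s)
    have hr1 : (‖r‖)^2 ≤ 1 := by nlinarith
    have h3 : (‖r‖)^2 * (a*b) ≤ a*b := by
      nlinarith [mul_nonneg ha0 hb0]
    have h5 : (Sig+5) * (κ+η) ≤ (Sig+5)^2 * (κ+η) := by nlinarith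
    calc (‖1 - r^2‖)^2 = (‖r‖)^2 * (a*b) := habs2
    _ ≤ a*b := h3
    _ ≤ (Sig+5) * (κ+η) := hprod.2
    _ ≤ (Sig+5)^2 * (κ+η) := h5
    _ = ((Sig+5) * s)^2 := by rw [mul_pow, hs2]

end Stmt13Aux

/-- For `z = E + iη` with `|E| ≤ Σ` (`Σ ≥ 3`), `0 < η ≤ 3`, and `κ = ||E| − 2|`:
`c ≤ |m_sc(z)| ≤ 1` and `c·√(κ+η) ≤ |1 − m_sc(z)²| ≤ C·√(κ+η)` for constants
`c, C > 0` depending only on `Σ`. -/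
theorem stmt_13 (Sig : ℝ) (hSig : 3 ≤ Sig) :
    ∃ c C : ℝ, 0 < c ∧ 0 < C ∧
      ∀ E η : ℝ, |E| ≤ Sig → 0 < η → η ≤ 3 →
        c ≤ ‖mSC (E + η * Complex.I)‖ ∧
        ‖mSC (E + η * Complex.I)‖ ≤ 1 ∧
        c * Real.sqrt (|(|E| - 2)| + η)
            ≤ ‖1 - (mSC (E + η * Complex.I)) ^ 2‖ ∧
        ‖1 - (mSC (E + η * Complex.I)) ^ 2‖
            ≤ C * Real.sqrt (|(|E| - 2)| + η) := by
  refine ⟨(Sig+4)⁻¹, Sig+5, by positivity, by linarith, ?_⟩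
  intro E η hE hη hη3
  exact Stmt13Aux.main_bounds Sig hSig E η hE hη hη3
end

section
/- Let z = E + iη with |E| ≤ Σ, 0 < η ≤ 3, and κ := ||E| − 2|. Then Im m_sc(z) is comparable to √(κ+η) when |E| ≤ 2, and comparable to η/√(κ+η) when |E| ≥ 2, with implied constants depending only on Σ. -/
open MeasureTheory

open Real Set

namespace SC14

noncomputable def g (E η x : ℝ) : ℝ := rhoSC x * (η / ((x - E) ^ 2 + η ^ 2))

lemma rho_cont : Continuous rhoSC := by
  unfold rhoSC
  fun_prop

lemma rho_nonneg (x : ℝ) : 0 ≤ rhoSC x := by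
  unfold rhoSC
  positivity

lemma rho_zero {x : ℝ} (h : x ∉ Ioo (-2 : ℝ) 2) : rhoSC x = 0 := by
  have h4 : 4 - x ^ 2 ≤ 0 := by
    simp only [mem_Ioo, not_and_or, not_lt] at h
    rcases h with h | h <;> nlinarith
  unfold rhoSC
  rw [max_eq_right h4, Real.sqrt_zero, zero_div]

lemma g_nonneg (E η x : ℝ) (hη : 0 < η) : 0 ≤ g E η x := by
  have := rho_nonneg x
  unfold g
  positivity

lemma g_cont (E η : ℝ) (hη : 0 < η) : Continuous (g E η) := by
  apply rho_cont.mul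
  apply continuous_const.div
  · fun_prop
  · intro x; positivity

lemma g_integrable (E η : ℝ) (hη : 0 < η) : Integrable (g E η) := by
  apply (g_cont E η hη).integrable_of_hasCompactSupport
  apply HasCompactSupport.intro (isCompact_Icc (a := (-2:ℝ)) (b := 2))
  intro x hx
  have : x ∉ Ioo (-2:ℝ) 2 := fun h => hx (Ioo_subset_Icc_self h)
  unfold g
  rw [rho_zero this, zero_mul]

lemma f_integrable (E η : ℝ) (hη : 0 < η) :
    Integrable (fun x : ℝ => (rhoSC x : ℂ) / ((x : ℂ) - (E + η * Complex.I))) := by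
  have hne : ∀ x : ℝ, ((x : ℂ) - (E + η * Complex.I)) ≠ 0 := by
    intro x h
    have := congrArg Complex.im h
    simp at this
    exact hη.ne' this
  apply Continuous.integrable_of_hasCompactSupport
  · exact (Complex.continuous_ofReal.comp rho_cont).div
      (by fun_prop) hne
  · apply HasCompactSupport.intro (isCompact_Icc (a := (-2:ℝ)) (b := 2))
    intro x hx
    have : x ∉ Ioo (-2:ℝ) 2 := fun h => hx (Ioo_subset_Icc_self h)
    rw [rho_zero this]
    simp

lemma im_eq (E η : ℝ) (hη : 0 < η) :
    (mSC (E + η * Complex.I)).im = ∫ x : ℝ, g E η x := by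
  unfold mSC
  rw [show (∫ x : ℝ, (rhoSC x : ℂ) / ((x : ℂ) - (E + η * Complex.I))).im
      = ∫ x : ℝ, ((rhoSC x : ℂ) / ((x : ℂ) - (E + η * Complex.I))).im from
    (integral_im (f_integrable E η hη)).symm]
  congr 1
  ext x
  rw [Complex.div_im]
  have hns : Complex.normSq ((x:ℂ) - (E + η * Complex.I)) = (x - E) ^ 2 + η ^ 2 := by
    simp [Complex.normSq_apply]
    ring
  unfold g
  rw [hns]
  simp
  ring

lemma g_even (E η : ℝ) : (∫ x : ℝ, g E η x) = ∫ x : ℝ, g (-E) η x := by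
  rw [← MeasureTheory.integral_neg_eq_self (g (-E) η)]
  congr 1
  ext x
  unfold g rhoSC
  ring_nf

lemma integral_g_eq (E η : ℝ) :
    (∫ x : ℝ, g E η x) = ∫ x in (-2 : ℝ)..2, g E η x := by
  rw [intervalIntegral.integral_eq_integral_of_support_subset]
  intro x hx
  simp only [Function.mem_support, ne_eq] at hx
  by_contra hmem
  apply hx
  unfold g
  rw [rho_zero, zero_mul]
  intro hio
  exact hmem (Ioo_subset_Ioc_self hio)

lemma lower_core {E η a b r : ℝ} (hη : 0 < η) (hab : a ≤ b)
    (h : ∀ x ∈ Icc a b, r ≤ g E η x) :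
    (b - a) * r ≤ ∫ x : ℝ, g E η x := by
  have h1 : (∫ x in Icc a b, g E η x) ≤ ∫ x : ℝ, g E η x := by
    apply setIntegral_le_integral (g_integrable E η hη)
    filter_upwards with x using g_nonneg E η x hη
  refine le_trans ?_ h1
  have h2 : (∫ x in Icc a b, (r : ℝ)) ≤ ∫ x in Icc a b, g E η x := by
    apply setIntegral_mono_on
    · exact integrable_const _
    · exact (g_integrable E η hη).integrableOn
    · exact measurableSet_Icc
    · exact h
  rw [setIntegral_const, Real.volume_real_Icc_of_le hab, smul_eq_mul] at h2
  exact h2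

lemma base_pos {s a b x : ℝ} (hs : 0 < s) (hx : x ∈ Icc a b) : 0 < x - a + s := by
  have := hx.1; linarith

lemma base_pos' {s a b x : ℝ} (hs : 0 < s) (hx : x ∈ Icc a b) : 0 < b - x + s := by
  have := hx.2; linarith

lemma L2 {s a b : ℝ} (hs : 0 < s) (hab : a ≤ b) :
    (∫ x in a..b, ((x - a + s) ^ 2)⁻¹) ≤ s⁻¹ := by
  have huicc : Set.uIcc a b = Icc a b := uIcc_of_le hab
  have key : (∫ x in a..b, ((x - a + s) ^ 2)⁻¹)
      = -((b - a + s)⁻¹) - -((a - a + s)⁻¹) := by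
    apply intervalIntegral.integral_eq_sub_of_hasDerivAt
    · intro x hx
      rw [huicc] at hx
      have hpos := base_pos hs hx
      have h1 : HasDerivAt (fun y : ℝ => y - a + s) 1 x := by
        simpa using ((hasDerivAt_id x).sub_const a).add_const s
      have h2 := (h1.inv hpos.ne').neg
      exact h2.congr_deriv (by ring)
    · apply ContinuousOn.intervalIntegrable
      rw [huicc]
      apply ContinuousOn.inv₀
      · fun_prop
      · intro x hx
        exact pow_ne_zero 2 (base_pos hs hx).ne'
  rw [key]
  have h1 : 0 < b - a + s := by linarith
  have h2 : (0:ℝ) < a - a + s := by linarith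
  have : a - a + s = s := by ring
  rw [this]
  have := inv_pos.mpr h1
  linarith

lemma L2' {s a b : ℝ} (hs : 0 < s) (hab : a ≤ b) :
    (∫ x in a..b, ((b - x + s) ^ 2)⁻¹) ≤ s⁻¹ := by
  have h : (∫ x in a..b, ((b - x + s) ^ 2)⁻¹)
      = ∫ x in a..b, ((x - a + s) ^ 2)⁻¹ := by
    have := intervalIntegral.integral_comp_sub_left
      (a := a) (b := b) (fun x => ((x - a + s) ^ 2)⁻¹) (a + b)
    rw [show a + b - b = a by ring, show a + b - a = b by ring] at this
    rw [← this]
    congr 1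
    ext x
    ring_nf
  rw [h]
  exact L2 hs hab

lemma sqrt_deriv {s a b x : ℝ} (hs : 0 < s) (hx : x ∈ Icc a b) :
    HasDerivAt (fun y : ℝ => -(2 * (Real.sqrt (y - a + s))⁻¹))
      (((x - a + s) * Real.sqrt (x - a + s))⁻¹) x := by
  have hpos := base_pos hs hx
  have h1 : HasDerivAt (fun y : ℝ => y - a + s) 1 x := by
    simpa using ((hasDerivAt_id x).sub_const a).add_const s
  have h2 : HasDerivAt (fun y : ℝ => Real.sqrt (y - a + s))
      (1 / (2 * Real.sqrt (x - a + s)) * 1) x :=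
    (Real.hasDerivAt_sqrt hpos.ne').comp x h1
  have hsq : Real.sqrt (x - a + s) ≠ 0 := by
    positivity
  have h3 := ((h2.inv hsq).const_mul (2:ℝ)).neg
  refine h3.congr_deriv ?_
  have hv : Real.sqrt (x - a + s) ^ 2 = x - a + s := Real.sq_sqrt hpos.le
  rw [← hv]
  field_simp
  rw [Real.sqrt_sq (Real.sqrt_nonneg _)]

lemma L3 {s a b : ℝ} (hs : 0 < s) (hab : a ≤ b) :
    (∫ x in a..b, ((x - a + s) * Real.sqrt (x - a + s))⁻¹) ≤ 2 * (Real.sqrt s)⁻¹ := by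
  have huicc : Set.uIcc a b = Icc a b := uIcc_of_le hab
  have key : (∫ x in a..b, ((x - a + s) * Real.sqrt (x - a + s))⁻¹)
      = -(2 * (Real.sqrt (b - a + s))⁻¹) - -(2 * (Real.sqrt (a - a + s))⁻¹) := by
    apply intervalIntegral.integral_eq_sub_of_hasDerivAt
    · intro x hx
      rw [huicc] at hx
      exact sqrt_deriv hs hx
    · apply ContinuousOn.intervalIntegrable
      rw [huicc]
      apply ContinuousOn.inv₀
      · fun_prop
      · intro x hx
        have hpos := base_pos hs hx
        positivity
  rw [key, show a - a + s = s by ring]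
  have h1 : 0 < Real.sqrt (b - a + s) := Real.sqrt_pos.mpr (by linarith)
  have := inv_pos.mpr h1
  linarith

lemma L3' {s a b : ℝ} (hs : 0 < s) (hab : a ≤ b) :
    (∫ x in a..b, ((b - x + s) * Real.sqrt (b - x + s))⁻¹) ≤ 2 * (Real.sqrt s)⁻¹ := by
  have h : (∫ x in a..b, ((b - x + s) * Real.sqrt (b - x + s))⁻¹)
      = ∫ x in a..b, ((x - a + s) * Real.sqrt (x - a + s))⁻¹ := by
    have := intervalIntegral.integral_comp_sub_left
      (a := a) (b := b) (fun x => ((x - a + s) * Real.sqrt (x - a + s))⁻¹) (a + b)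
    rw [show a + b - b = a by ring, show a + b - a = b by ring] at this
    rw [← this]
    congr 1
    ext x
    ring_nf
  rw [h]
  exact L3 hs hab

lemma rho_upper {x : ℝ} (hx : x ∈ Icc (-2:ℝ) 2) : rhoSC x ≤ Real.sqrt (2 - x) / Real.pi := by
  have h1 : max (4 - x ^ 2) 0 ≤ 4 * (2 - x) := by
    rcases hx with ⟨h2, h3⟩
    apply max_le <;> nlinarith
  have h2 : Real.sqrt (max (4 - x ^ 2) 0) ≤ 2 * Real.sqrt (2 - x) := by
    calc Real.sqrt (max (4 - x ^ 2) 0) ≤ Real.sqrt (4 * (2 - x)) := Real.sqrt_le_sqrt h1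
    _ = 2 * Real.sqrt (2 - x) := by
        rw [show (4:ℝ) * (2 - x) = 2^2 * (2-x) by ring, Real.sqrt_mul (by positivity),
          Real.sqrt_sq (by norm_num)]
  unfold rhoSC
  rw [div_le_div_iff₀ (by positivity) Real.pi_pos]
  have hpi := Real.pi_pos
  nlinarith [Real.sqrt_nonneg (2 - x)]

lemma ptwise {w η : ℝ} (hw : 0 ≤ w) (hη : 0 < η) :
    Real.sqrt w * (η / (w ^ 2 + η ^ 2)) ≤ 2 * η * ((w + η) * Real.sqrt (w + η))⁻¹ := by
  have hwη : 0 < w + η := by linarith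
  have hsq : 0 < Real.sqrt (w + η) := Real.sqrt_pos.mpr hwη
  have h1 : Real.sqrt w * Real.sqrt (w + η) ≤ w + η := by
    calc Real.sqrt w * Real.sqrt (w + η) ≤ Real.sqrt (w + η) * Real.sqrt (w + η) :=
      mul_le_mul_of_nonneg_right (Real.sqrt_le_sqrt (by linarith)) hsq.le
    _ = w + η := Real.mul_self_sqrt hwη.le
  rw [show 2 * η * ((w + η) * Real.sqrt (w + η))⁻¹
      = (2 * η) / ((w + η) * Real.sqrt (w + η)) from (div_eq_mul_inv _ _).symm,
    mul_div_assoc']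
  rw [div_le_div_iff₀ (by positivity) (by positivity)]
  nlinarith [mul_le_mul_of_nonneg_right h1 (mul_nonneg hη.le hwη.le), sq_nonneg (w - η),
    Real.sqrt_nonneg w]

lemma ptwise2 {w η : ℝ} (hw : 0 ≤ w) (hη : 0 < η) :
    η / (w ^ 2 + η ^ 2) ≤ 2 * η * ((w + η) ^ 2)⁻¹ := by
  have hwη : 0 < w + η := by linarith
  rw [show 2 * η * ((w + η) ^ 2)⁻¹ = (2 * η) / ((w + η) ^ 2) from (div_eq_mul_inv _ _).symm]
  rw [div_le_div_iff₀ (by positivity) (by positivity)]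
  nlinarith [sq_nonneg (w - η)]

lemma sqrt_add_le' {a b : ℝ} (ha : 0 ≤ a) (hb : 0 ≤ b) :
    Real.sqrt (a + b) ≤ Real.sqrt a + Real.sqrt b := by
  have h := Real.sqrt_le_sqrt (show a + b ≤ (Real.sqrt a + Real.sqrt b) ^ 2 by
    nlinarith [Real.sq_sqrt ha, Real.sq_sqrt hb,
      mul_nonneg (Real.sqrt_nonneg a) (Real.sqrt_nonneg b)])
  rwa [Real.sqrt_sq (by positivity)] at h

lemma upperB {E η : ℝ} (hE : 2 ≤ E) (hη : 0 < η) :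
    (∫ x : ℝ, g E η x) ≤ 2 * (η / Real.sqrt (E - 2 + η)) := by
  have hs : 0 < E - 2 + η := by linarith
  rw [integral_g_eq]
  have hmono : (∫ x in (-2:ℝ)..2, g E η x)
      ≤ ∫ x in (-2:ℝ)..2, (2 * η / Real.pi) *
        ((2 - x + (E - 2 + η)) * Real.sqrt (2 - x + (E - 2 + η)))⁻¹ := by
    apply intervalIntegral.integral_mono_on (by norm_num)
    · exact (g_cont E η hη).intervalIntegrable _ _
    · apply ContinuousOn.intervalIntegrable
      apply continuousOn_const.mul
      apply ContinuousOn.inv₀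
      · fun_prop
      · intro x hx
        rw [uIcc_of_le (by norm_num : (-2:ℝ) ≤ 2)] at hx
        have hx2 := hx.2
        have h0 : 0 < 2 - x + (E - 2 + η) := by linarith
        positivity
    · intro x hx
      have hw : (0:ℝ) ≤ E - x := by have := hx.2; linarith
      have h1 : rhoSC x ≤ Real.sqrt (E - x) / Real.pi := by
        refine (rho_upper hx).trans ?_
        gcongr
      have h2 := ptwise hw hη
      calc g E η x = rhoSC x * (η / ((x - E) ^ 2 + η ^ 2)) := rfl
        _ ≤ (Real.sqrt (E - x) / Real.pi) * (η / ((x - E) ^ 2 + η ^ 2)) :=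
            mul_le_mul_of_nonneg_right h1 (by positivity)
        _ = (1 / Real.pi) * (Real.sqrt (E - x) * (η / ((E - x) ^ 2 + η ^ 2))) := by
            rw [show (x - E) ^ 2 = (E - x) ^ 2 by ring]; ring
        _ ≤ (1 / Real.pi) * (2 * η * ((E - x + η) * Real.sqrt (E - x + η))⁻¹) := by
            have hpi : (0:ℝ) ≤ 1 / Real.pi := by positivity
            exact mul_le_mul_of_nonneg_left h2 hpi
        _ = (2 * η / Real.pi) *
            ((2 - x + (E - 2 + η)) * Real.sqrt (2 - x + (E - 2 + η)))⁻¹ := by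
            rw [show 2 - x + (E - 2 + η) = E - x + η by ring]; ring
  refine hmono.trans ?_
  rw [intervalIntegral.integral_const_mul]
  have h3 := L3' (s := E - 2 + η) (a := (-2:ℝ)) (b := 2) hs (by norm_num)
  calc (2 * η / Real.pi) * ∫ x in (-2:ℝ)..2,
        ((2 - x + (E - 2 + η)) * Real.sqrt (2 - x + (E - 2 + η)))⁻¹
      ≤ (2 * η / Real.pi) * (2 * (Real.sqrt (E - 2 + η))⁻¹) :=
        mul_le_mul_of_nonneg_left h3 (by positivity)
    _ ≤ 2 * (η / Real.sqrt (E - 2 + η)) := by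
        have hpi : (3:ℝ) ≤ Real.pi := by
          have := Real.pi_gt_three; linarith
        have hinv : (0:ℝ) ≤ (Real.sqrt (E - 2 + η))⁻¹ := by positivity
        have he : 0 ≤ η * (Real.sqrt (E - 2 + η))⁻¹ := mul_nonneg hη.le hinv
        have h4 : (4:ℝ) / Real.pi ≤ 2 := by
          rw [div_le_iff₀ Real.pi_pos]; linarith
        calc (2 * η / Real.pi) * (2 * (Real.sqrt (E - 2 + η))⁻¹)
            = (4 / Real.pi) * (η * (Real.sqrt (E - 2 + η))⁻¹) := by ring
          _ ≤ 2 * (η * (Real.sqrt (E - 2 + η))⁻¹) := mul_le_mul_of_nonneg_right h4 he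
          _ = 2 * (η / Real.sqrt (E - 2 + η)) := by rw [div_eq_mul_inv]

lemma upperA {E η : ℝ} (hE0 : 0 ≤ E) (hE2 : E ≤ 2) (hη : 0 < η) :
    (∫ x : ℝ, g E η x) ≤ 3 * Real.sqrt ((2 - E) + η) := by
  have hm2E : (-2:ℝ) ≤ E := by linarith
  have hκ : (0:ℝ) ≤ 2 - E := by linarith
  have hI1 : IntervalIntegrable (g E η) volume (-2) E := (g_cont E η hη).intervalIntegrable _ _
  have hI2 : IntervalIntegrable (g E η) volume E 2 := (g_cont E η hη).intervalIntegrable _ _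
  rw [integral_g_eq, ← intervalIntegral.integral_add_adjacent_intervals hI1 hI2]
  -- right piece
  have hR : (∫ x in E..2, g E η x) ≤ 2 * Real.sqrt (2 - E) / Real.pi := by
    have hmono : (∫ x in E..2, g E η x)
        ≤ ∫ x in E..2, (2 * η * Real.sqrt (2 - E) / Real.pi) * ((x - E + η) ^ 2)⁻¹ := by
      apply intervalIntegral.integral_mono_on hE2
      · exact hI2
      · apply ContinuousOn.intervalIntegrable
        apply continuousOn_const.mul
        apply ContinuousOn.inv₀
        · fun_prop
        · intro x hx
          rw [uIcc_of_le hE2] at hx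
          have h0 : 0 < x - E + η := by have := hx.1; linarith
          positivity
      · intro x hx
        have hx2 : x ∈ Icc (-2:ℝ) 2 := ⟨by linarith [hx.1], hx.2⟩
        have hw : (0:ℝ) ≤ x - E := by linarith [hx.1]
        have h1 : rhoSC x ≤ Real.sqrt (2 - E) / Real.pi := by
          refine (rho_upper hx2).trans ?_
          gcongr
          · linarith [hx.1]
        have h2 := ptwise2 (w := x - E) hw hη
        calc g E η x = rhoSC x * (η / ((x - E) ^ 2 + η ^ 2)) := rfl
          _ ≤ (Real.sqrt (2 - E) / Real.pi) * (η / ((x - E) ^ 2 + η ^ 2)) :=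
              mul_le_mul_of_nonneg_right h1 (by positivity)
          _ ≤ (Real.sqrt (2 - E) / Real.pi) * (2 * η * ((x - E + η) ^ 2)⁻¹) :=
              mul_le_mul_of_nonneg_left h2 (by positivity)
          _ = (2 * η * Real.sqrt (2 - E) / Real.pi) * ((x - E + η) ^ 2)⁻¹ := by ring
    refine hmono.trans ?_
    rw [intervalIntegral.integral_const_mul]
    have h3 := L2 (s := η) (a := E) (b := 2) hη hE2
    calc (2 * η * Real.sqrt (2 - E) / Real.pi) * ∫ x in E..2, ((x - E + η) ^ 2)⁻¹
        ≤ (2 * η * Real.sqrt (2 - E) / Real.pi) * η⁻¹ :=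
          mul_le_mul_of_nonneg_left h3 (by positivity)
      _ = 2 * Real.sqrt (2 - E) / Real.pi := by
          field_simp
  -- left piece
  have hL : (∫ x in (-2:ℝ)..E, g E η x)
      ≤ 2 * Real.sqrt (2 - E) / Real.pi + 4 * Real.sqrt η / Real.pi := by
    have hint1 : IntervalIntegrable
        (fun x => (2 * η * Real.sqrt (2 - E) / Real.pi) * ((E - x + η) ^ 2)⁻¹)
        volume (-2) E := by
      apply ContinuousOn.intervalIntegrable
      apply continuousOn_const.mul
      apply ContinuousOn.inv₀
      · fun_prop
      · intro x hx
        rw [uIcc_of_le hm2E] at hx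
        have h0 : 0 < E - x + η := by have := hx.2; linarith
        positivity
    have hint2 : IntervalIntegrable
        (fun x => (2 * η / Real.pi) * ((E - x + η) * Real.sqrt (E - x + η))⁻¹)
        volume (-2) E := by
      apply ContinuousOn.intervalIntegrable
      apply continuousOn_const.mul
      apply ContinuousOn.inv₀
      · fun_prop
      · intro x hx
        rw [uIcc_of_le hm2E] at hx
        have h0 : 0 < E - x + η := by have := hx.2; linarith
        positivity
    have hmono : (∫ x in (-2:ℝ)..E, g E η x)
        ≤ ∫ x in (-2:ℝ)..E, ((2 * η * Real.sqrt (2 - E) / Real.pi) * ((E - x + η) ^ 2)⁻¹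
            + (2 * η / Real.pi) * ((E - x + η) * Real.sqrt (E - x + η))⁻¹) := by
      apply intervalIntegral.integral_mono_on hm2E hI1 (hint1.add hint2)
      intro x hx
      have hx2 : x ∈ Icc (-2:ℝ) 2 := ⟨hx.1, hx.2.trans hE2⟩
      have hw : (0:ℝ) ≤ E - x := by linarith [hx.2]
      have h1 : rhoSC x ≤ (Real.sqrt (2 - E) + Real.sqrt (E - x)) / Real.pi := by
        refine (rho_upper hx2).trans ?_
        gcongr
        rw [show 2 - x = (2 - E) + (E - x) by ring]
        exact sqrt_add_le' hκ hw
      calc g E η x = rhoSC x * (η / ((x - E) ^ 2 + η ^ 2)) := rfl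
        _ ≤ ((Real.sqrt (2 - E) + Real.sqrt (E - x)) / Real.pi) * (η / ((x - E) ^ 2 + η ^ 2)) :=
            mul_le_mul_of_nonneg_right h1 (by positivity)
        _ = (Real.sqrt (2 - E) / Real.pi) * (η / ((E - x) ^ 2 + η ^ 2))
            + (1 / Real.pi) * (Real.sqrt (E - x) * (η / ((E - x) ^ 2 + η ^ 2))) := by
            rw [show (x - E) ^ 2 = (E - x) ^ 2 by ring]; ring
        _ ≤ (Real.sqrt (2 - E) / Real.pi) * (2 * η * ((E - x + η) ^ 2)⁻¹)
            + (1 / Real.pi) * (2 * η * ((E - x + η) * Real.sqrt (E - x + η))⁻¹) :=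
            add_le_add (mul_le_mul_of_nonneg_left (ptwise2 hw hη) (by positivity))
              (mul_le_mul_of_nonneg_left (ptwise hw hη) (by positivity))
        _ = (2 * η * Real.sqrt (2 - E) / Real.pi) * ((E - x + η) ^ 2)⁻¹
            + (2 * η / Real.pi) * ((E - x + η) * Real.sqrt (E - x + η))⁻¹ := by ring
    refine hmono.trans ?_
    rw [intervalIntegral.integral_add hint1 hint2,
      intervalIntegral.integral_const_mul, intervalIntegral.integral_const_mul]
    have h4 := L2' (s := η) (a := (-2:ℝ)) (b := E) hη hm2E
    have h5 := L3' (s := η) (a := (-2:ℝ)) (b := E) hη hm2E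
    have hb1 : (2 * η * Real.sqrt (2 - E) / Real.pi) * (∫ x in (-2:ℝ)..E, ((E - x + η) ^ 2)⁻¹)
        ≤ (2 * η * Real.sqrt (2 - E) / Real.pi) * η⁻¹ :=
      mul_le_mul_of_nonneg_left h4 (by positivity)
    have hb2 : (2 * η / Real.pi) *
          (∫ x in (-2:ℝ)..E, ((E - x + η) * Real.sqrt (E - x + η))⁻¹)
        ≤ (2 * η / Real.pi) * (2 * (Real.sqrt η)⁻¹) :=
      mul_le_mul_of_nonneg_left h5 (by positivity)
    have he1 : (2 * η * Real.sqrt (2 - E) / Real.pi) * η⁻¹ = 2 * Real.sqrt (2 - E) / Real.pi := by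
      field_simp
    have he2 : (2 * η / Real.pi) * (2 * (Real.sqrt η)⁻¹) = 4 * Real.sqrt η / Real.pi := by
      rw [← Real.div_sqrt (x := η)]
      have : Real.sqrt η ≠ 0 := (Real.sqrt_pos.mpr hη).ne'
      field_simp
      rw [Real.sq_sqrt hη.le]
      ring
    rw [he1] at hb1
    rw [he2] at hb2
    linarith
  -- combine
  have hpi : (3:ℝ) ≤ Real.pi := by have := Real.pi_gt_three; linarith
  have hs1 : Real.sqrt (2 - E) ≤ Real.sqrt ((2 - E) + η) := Real.sqrt_le_sqrt (by linarith)
  have hs2 : Real.sqrt η ≤ Real.sqrt ((2 - E) + η) := Real.sqrt_le_sqrt (by linarith)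
  have hs0 : 0 ≤ Real.sqrt ((2 - E) + η) := Real.sqrt_nonneg _
  have h6 : 2 * Real.sqrt (2 - E) / Real.pi + (2 * Real.sqrt (2 - E) / Real.pi
      + 4 * Real.sqrt η / Real.pi) ≤ (8 / Real.pi) * Real.sqrt ((2 - E) + η) := by
    rw [div_mul_eq_mul_div]
    rw [← add_div, ← add_div, div_le_div_iff₀ Real.pi_pos Real.pi_pos]
    nlinarith [Real.sqrt_nonneg (2 - E), Real.sqrt_nonneg η, Real.pi_pos]
  have h7 : (8 / Real.pi) * Real.sqrt ((2 - E) + η) ≤ 3 * Real.sqrt ((2 - E) + η) := by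
    apply mul_le_mul_of_nonneg_right _ hs0
    rw [div_le_iff₀ Real.pi_pos]
    linarith
  linarith

lemma rho_lower {a x : ℝ} (ha : 0 ≤ a) (h1 : a ≤ 2 - x) (h2 : 1 ≤ 2 + x) :
    Real.sqrt a / (2 * Real.pi) ≤ rhoSC x := by
  unfold rhoSC
  gcongr
  refine le_max_of_le_left ?_
  nlinarith

lemma sqrt_four_mul {u : ℝ} (hu : 0 ≤ u) : Real.sqrt (4 * u) = 2 * Real.sqrt u := by
  rw [show (4:ℝ) * u = 2 ^ 2 * u by ring, Real.sqrt_mul (by positivity),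
    Real.sqrt_sq (by norm_num)]

lemma lowerA1 {E η : ℝ} (hE0 : 0 ≤ E) (hE2 : E ≤ 2) (hη : 0 < η) (hc : η ≤ 2 - E) :
    Real.sqrt ((2 - E) + η) / 51 ≤ ∫ x : ℝ, g E η x := by
  have hu : (0:ℝ) ≤ (2 - E) / 2 := by linarith
  have hcore := lower_core (E := E) (η := η) (a := E) (b := E + η / 2)
    (r := Real.sqrt ((2 - E) / 2) / (2 * Real.pi) * (η / (2 * η ^ 2))) hη (by linarith) ?_
  · have hlen : (E + η / 2 - E) = η / 2 := by ring
    rw [hlen] at hcore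
    refine le_trans ?_ hcore
    have heq : η / 2 * (Real.sqrt ((2 - E) / 2) / (2 * Real.pi) * (η / (2 * η ^ 2)))
        = Real.sqrt ((2 - E) / 2) / (8 * Real.pi) := by
      field_simp
      ring
    rw [heq]
    have hs : Real.sqrt ((2 - E) + η) ≤ 2 * Real.sqrt ((2 - E) / 2) := by
      rw [← sqrt_four_mul hu]
      exact Real.sqrt_le_sqrt (by linarith)
    have hpi : Real.pi < 3.15625 := by
      have := Real.pi_lt_d2; linarith
    have hsn : 0 ≤ Real.sqrt ((2 - E) / 2) := Real.sqrt_nonneg _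
    rw [div_le_div_iff₀ (by norm_num) (by positivity)]
    nlinarith [mul_le_mul_of_nonneg_right hs (by positivity : (0:ℝ) ≤ 8 * Real.pi),
      Real.pi_pos, mul_nonneg hsn Real.pi_pos.le]
  · intro x hx
    have hρ : Real.sqrt ((2 - E) / 2) / (2 * Real.pi) ≤ rhoSC x := by
      apply rho_lower hu
      · have := hx.2; linarith
      · have := hx.1; linarith
    have hker : η / (2 * η ^ 2) ≤ η / ((x - E) ^ 2 + η ^ 2) := by
      apply div_le_div_of_nonneg_left hη.le (by positivity)
      nlinarith [hx.1, hx.2]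
    exact mul_le_mul hρ hker (by positivity) (rho_nonneg x)

lemma sqrt_half : (1:ℝ)/2 ≤ Real.sqrt (1/2) := by
  have h := Real.sqrt_le_sqrt (show (1/4:ℝ) ≤ 1/2 by norm_num)
  rwa [show (1/4:ℝ) = (1/2)^2 by norm_num, Real.sqrt_sq (by norm_num)] at h

lemma lowerA2 {E η : ℝ} (hE0 : 0 ≤ E) (hE2 : E ≤ 2) (hη : 0 < η) (hη3 : η ≤ 3)
    (hc : 2 - E ≤ η) :
    Real.sqrt ((2 - E) + η) / 500 ≤ ∫ x : ℝ, g E η x := by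
  set η' := min η 1 with hη'def
  have hη'0 : 0 < η' := lt_min hη (by norm_num)
  have hη'1 : η' ≤ 1 := min_le_right _ _
  have hη'η : η' ≤ η := min_le_left _ _
  have hcore := lower_core (E := E) (η := η) (a := 2 - η') (b := 2 - η' / 2)
    (r := Real.sqrt (η' / 2) / (2 * Real.pi) * (η / (2 * η ^ 2))) hη (by linarith) ?_
  · have hlen : (2 - η' / 2 - (2 - η')) = η' / 2 := by ring
    rw [hlen] at hcore
    refine le_trans ?_ hcore
    have hpi : Real.pi < 3.15625 := by have := Real.pi_lt_d2; linarith
    have hpi0 := Real.pi_pos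
    rcases le_total η 1 with h1 | h1
    · have he : η' = η := min_eq_left h1
      rw [he]
      have heq : η / 2 * (Real.sqrt (η / 2) / (2 * Real.pi) * (η / (2 * η ^ 2)))
          = Real.sqrt (η / 2) / (8 * Real.pi) := by
        field_simp
        ring
      rw [heq]
      have hs : Real.sqrt ((2 - E) + η) ≤ 2 * Real.sqrt (η / 2) := by
        rw [← sqrt_four_mul (by positivity : (0:ℝ) ≤ η / 2)]
        exact Real.sqrt_le_sqrt (by linarith)
      have hsn : 0 ≤ Real.sqrt (η / 2) := Real.sqrt_nonneg _
      rw [div_le_div_iff₀ (by norm_num) (by positivity)]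
      nlinarith [mul_le_mul_of_nonneg_right hs (by positivity : (0:ℝ) ≤ 8 * Real.pi),
        mul_nonneg hsn hpi0.le]
    · have he : η' = 1 := min_eq_right h1
      rw [he]
      have heq : (1:ℝ) / 2 * (Real.sqrt (1 / 2) / (2 * Real.pi) * (η / (2 * η ^ 2)))
          = Real.sqrt (1 / 2) / (8 * Real.pi * η) := by
        field_simp
        ring
      rw [heq]
      have h25 : Real.sqrt ((2 - E) + η) ≤ 2.5 := by
        rw [show (2.5:ℝ) = Real.sqrt (2.5 ^ 2) by rw [Real.sqrt_sq (by norm_num)]]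
        exact Real.sqrt_le_sqrt (by nlinarith)
      have hhalf := sqrt_half
      rw [div_le_div_iff₀ (by norm_num) (by positivity)]
      nlinarith [mul_le_mul_of_nonneg_right h25 (by positivity : (0:ℝ) ≤ 8 * Real.pi * η),
        mul_le_mul hpi.le hη3 hη.le (by norm_num : (0:ℝ) ≤ 3.15625)]
  · intro x hx
    have hρ : Real.sqrt (η' / 2) / (2 * Real.pi) ≤ rhoSC x := by
      apply rho_lower (by positivity)
      · have := hx.2; linarith
      · have := hx.1; linarith
    have hker : η / (2 * η ^ 2) ≤ η / ((x - E) ^ 2 + η ^ 2) := by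
      apply div_le_div_of_nonneg_left hη.le (by positivity)
      nlinarith [hx.1, hx.2]
    exact mul_le_mul hρ hker (by positivity) (rho_nonneg x)

set_option maxHeartbeats 1000000 in
lemma lowerB {E η T : ℝ} (hE : 2 ≤ E) (hη : 0 < η) (hη3 : η ≤ 3) (hT1 : 1 ≤ T)
    (hT : E - 2 + η ≤ T) :
    η / Real.sqrt (E - 2 + η) / (101 * T ^ 2) ≤ ∫ x : ℝ, g E η x := by
  set t := E - 2 + η with ht_def
  have ht : 0 < t := by simp only [ht_def]; linarith
  set δ := min t 1 with hδdef
  have hδ0 : 0 < δ := lt_min ht (by norm_num)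
  have hδ1 : δ ≤ 1 := min_le_right _ _
  have hδt : δ ≤ t := min_le_left _ _
  have hcore := lower_core (E := E) (η := η) (a := 2 - δ) (b := 2 - δ / 2)
    (r := Real.sqrt (δ / 2) / (2 * Real.pi) * (η / (4 * t ^ 2))) hη (by linarith) ?_
  · have hlen : (2 - δ / 2 - (2 - δ)) = δ / 2 := by ring
    rw [hlen] at hcore
    refine le_trans ?_ hcore
    have hpi : Real.pi < 3.15625 := by have := Real.pi_lt_d2; linarith
    have hpi0 := Real.pi_pos
    have htt : Real.sqrt t * Real.sqrt t = t := Real.mul_self_sqrt ht.le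
    have hts : 0 < Real.sqrt t := Real.sqrt_pos.mpr ht
    have hss : Real.sqrt (δ / 2) * Real.sqrt (δ / 2) = δ / 2 :=
      Real.mul_self_sqrt (by positivity)
    have hsn : 0 ≤ Real.sqrt (δ / 2) := Real.sqrt_nonneg _
    -- key : t^2 ≤ 4 * T^2 * (√t * ((δ/2) * √(δ/2)))
    have key : t ^ 2 ≤ 4 * T ^ 2 * (Real.sqrt t * (δ / 2 * Real.sqrt (δ / 2))) := by
      rcases le_total t 1 with h1 | h1
      · have he : δ = t := min_eq_left h1
        rw [he]
        have h2 : Real.sqrt t ≤ 2 * Real.sqrt (t / 2) := by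
          rw [← sqrt_four_mul (by positivity : (0:ℝ) ≤ t / 2)]
          exact Real.sqrt_le_sqrt (by linarith)
        have hss2 : Real.sqrt (t / 2) * Real.sqrt (t / 2) = t / 2 :=
          Real.mul_self_sqrt (by positivity)
        have hsn2 : 0 ≤ Real.sqrt (t / 2) := Real.sqrt_nonneg _
        have hT2 : (1:ℝ) ≤ T ^ 2 := by nlinarith
        have hX : t ^ 2 / 4 ≤ Real.sqrt t * (t / 2 * Real.sqrt (t / 2)) := by
          have h3 : Real.sqrt t / 2 ≤ Real.sqrt (t / 2) := by linarith
          have h4 := mul_le_mul_of_nonneg_left h3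
            (mul_nonneg hts.le (by positivity : (0:ℝ) ≤ t / 2))
          nlinarith [h4]
        have h5 := mul_le_mul hT2 hX (by positivity) (by positivity : (0:ℝ) ≤ T ^ 2)
        nlinarith [h5]
      · have he : δ = 1 := min_eq_right h1
        rw [he]
        have h2 : (1:ℝ) ≤ Real.sqrt t := by
          rw [show (1:ℝ) = Real.sqrt 1 by rw [Real.sqrt_one]]
          exact Real.sqrt_le_sqrt h1
        have hhalf := sqrt_half
        have htT : t ^ 2 ≤ T ^ 2 := by nlinarith
        have hX4 : (1:ℝ)/4 ≤ Real.sqrt t * (1 / 2 * Real.sqrt (1/2)) := by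
          nlinarith [mul_le_mul h2 hhalf (by norm_num) hts.le]
        have h6 := mul_le_mul_of_nonneg_left hX4 (by positivity : (0:ℝ) ≤ 4 * T ^ 2)
        nlinarith [h6, htT]
    -- final arithmetic
    have heq : δ / 2 * (Real.sqrt (δ / 2) / (2 * Real.pi) * (η / (4 * t ^ 2)))
        = (δ / 2 * Real.sqrt (δ / 2)) * η / (8 * Real.pi * t ^ 2) := by
      field_simp
      ring
    rw [heq]
    have hden1 : (0:ℝ) < Real.sqrt t * (101 * T ^ 2) :=
      mul_pos hts (by positivity)
    have hden2 : (0:ℝ) < 8 * Real.pi * t ^ 2 := by positivity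
    rw [div_div, div_le_div_iff₀ hden1 hden2]
    have hY : (0:ℝ) ≤ T ^ 2 * Real.sqrt t * (δ / 2 * Real.sqrt (δ / 2)) * η :=
      mul_nonneg (mul_nonneg (mul_nonneg (by positivity) hts.le)
        (mul_nonneg (by positivity) hsn)) hη.le
    have h1 := mul_le_mul_of_nonneg_right key (by positivity : (0:ℝ) ≤ Real.pi * η)
    have h2 := mul_le_mul_of_nonneg_right hpi.le hY
    calc η * (8 * Real.pi * t ^ 2) = 8 * (t ^ 2 * (Real.pi * η)) := by ring
      _ ≤ 8 * (4 * T ^ 2 * (Real.sqrt t * (δ / 2 * Real.sqrt (δ / 2))) * (Real.pi * η)) := by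
          linarith
      _ = 32 * (Real.pi * (T ^ 2 * Real.sqrt t * (δ / 2 * Real.sqrt (δ / 2)) * η)) := by ring
      _ ≤ 32 * (3.15625 * (T ^ 2 * Real.sqrt t * (δ / 2 * Real.sqrt (δ / 2)) * η)) := by
          linarith
      _ = 101 * (T ^ 2 * Real.sqrt t * (δ / 2 * Real.sqrt (δ / 2)) * η) := by ring
      _ = δ / 2 * Real.sqrt (δ / 2) * η * (Real.sqrt t * (101 * T ^ 2)) := by ring
  · intro x hx
    have hρ : Real.sqrt (δ / 2) / (2 * Real.pi) ≤ rhoSC x := by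
      apply rho_lower (by positivity)
      · have := hx.2; linarith
      · have := hx.1; linarith
    have hker : η / (4 * t ^ 2) ≤ η / ((x - E) ^ 2 + η ^ 2) := by
      apply div_le_div_of_nonneg_left hη.le (by positivity)
      have h1 := hx.1
      have h2 := hx.2
      have hκ : 0 ≤ E - 2 := by linarith
      have hw0 : 0 ≤ E - x := by linarith
      have hw1 : E - x ≤ (E - 2) + δ := by linarith
      have h3 : (x - E) ^ 2 ≤ ((E - 2) + δ) ^ 2 := by nlinarith
      have h4 : E - 2 + δ + η ≤ 2 * t := by
        simp only [ht_def]; linarith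
      nlinarith [h3, h4, mul_nonneg (add_nonneg hκ hδ0.le) hη.le,
        sq_nonneg (E - 2 + δ + η)]
    exact mul_le_mul hρ hker (by positivity) (rho_nonneg x)

end SC14


/-- For `z = E + iη` with `|E| ≤ Σ`, `0 < η ≤ 3`, and `κ = ||E| − 2|`:
`Im m_sc(z) ≍ √(κ+η)` if `|E| ≤ 2`, and `Im m_sc(z) ≍ η/√(κ+η)` if `|E| ≥ 2`,
with constants depending only on `Σ`. -/
theorem stmt_14 (Sig : ℝ) (hSig : 3 ≤ Sig) :
    ∃ c C : ℝ, 0 < c ∧ 0 < C ∧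
      ∀ E η : ℝ, |E| ≤ Sig → 0 < η → η ≤ 3 →
        (|E| ≤ 2 →
          c * Real.sqrt (|(|E| - 2)| + η) ≤ (mSC (E + η * Complex.I)).im ∧
          (mSC (E + η * Complex.I)).im ≤ C * Real.sqrt (|(|E| - 2)| + η)) ∧
        (2 ≤ |E| →
          c * (η / Real.sqrt (|(|E| - 2)| + η)) ≤ (mSC (E + η * Complex.I)).im ∧
          (mSC (E + η * Complex.I)).im ≤ C * (η / Real.sqrt (|(|E| - 2)| + η))) := by
  refine ⟨((Sig + 3) ^ 2 * 1000)⁻¹, 4, by positivity, by norm_num, ?_⟩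
  intro E η hESig hη hη3
  have h36 : (36:ℝ) ≤ (Sig + 3) ^ 2 := by nlinarith
  have him : (mSC (E + η * Complex.I)).im = ∫ x : ℝ, SC14.g |E| η x := by
    rw [SC14.im_eq E η hη]
    rcases le_or_gt 0 E with h | h
    · rw [abs_of_nonneg h]
    · rw [abs_of_neg h]
      exact SC14.g_even E η
  constructor
  · intro hA2
    have hκ : |(|E| - 2)| = 2 - |E| := by rw [abs_of_nonpos (by linarith : |E| - 2 ≤ 0)]; ring
    rw [him, hκ]
    constructor
    · rcases le_total η (2 - |E|) with hcase | hcase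
      · have hlow := SC14.lowerA1 (abs_nonneg E) hA2 hη hcase
        have hc1 : ((Sig + 3) ^ 2 * 1000)⁻¹ ≤ (51:ℝ)⁻¹ :=
          inv_anti₀ (by norm_num) (by nlinarith)
        calc ((Sig + 3) ^ 2 * 1000)⁻¹ * Real.sqrt (2 - |E| + η)
            ≤ (51:ℝ)⁻¹ * Real.sqrt (2 - |E| + η) :=
              mul_le_mul_of_nonneg_right hc1 (Real.sqrt_nonneg _)
          _ = Real.sqrt (2 - |E| + η) / 51 := by rw [inv_mul_eq_div]
          _ ≤ _ := hlow
      · have hlow := SC14.lowerA2 (abs_nonneg E) hA2 hη hη3 hcase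
        have hc1 : ((Sig + 3) ^ 2 * 1000)⁻¹ ≤ (500:ℝ)⁻¹ :=
          inv_anti₀ (by norm_num) (by nlinarith)
        calc ((Sig + 3) ^ 2 * 1000)⁻¹ * Real.sqrt (2 - |E| + η)
            ≤ (500:ℝ)⁻¹ * Real.sqrt (2 - |E| + η) :=
              mul_le_mul_of_nonneg_right hc1 (Real.sqrt_nonneg _)
          _ = Real.sqrt (2 - |E| + η) / 500 := by rw [inv_mul_eq_div]
          _ ≤ _ := hlow
    · have hup := SC14.upperA (abs_nonneg E) hA2 hη
      have := Real.sqrt_nonneg (2 - |E| + η)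
      linarith
  · intro hA2
    have hκ : |(|E| - 2)| = |E| - 2 := abs_of_nonneg (by linarith)
    rw [him, hκ]
    have hT1 : (1:ℝ) ≤ Sig + 3 := by linarith
    have hT : |E| - 2 + η ≤ Sig + 3 := by linarith
    constructor
    · have hlow := SC14.lowerB hA2 hη hη3 hT1 hT
      have hc1 : ((Sig + 3) ^ 2 * 1000)⁻¹ ≤ (101 * (Sig + 3) ^ 2)⁻¹ :=
        inv_anti₀ (by positivity) (by nlinarith)
      have hnn : 0 ≤ η / Real.sqrt (|E| - 2 + η) :=
        div_nonneg hη.le (Real.sqrt_nonneg _)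
      calc ((Sig + 3) ^ 2 * 1000)⁻¹ * (η / Real.sqrt (|E| - 2 + η))
          ≤ (101 * (Sig + 3) ^ 2)⁻¹ * (η / Real.sqrt (|E| - 2 + η)) :=
            mul_le_mul_of_nonneg_right hc1 hnn
        _ = η / Real.sqrt (|E| - 2 + η) / (101 * (Sig + 3) ^ 2) := by
            rw [div_eq_mul_inv (η / Real.sqrt (|E| - 2 + η)), mul_comm]
        _ ≤ _ := hlow
    · have hup := SC14.upperB hA2 hη
      have hnn : 0 ≤ η / Real.sqrt (|E| - 2 + η) :=
        div_nonneg hη.le (Real.sqrt_nonneg _)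
      linarith
end
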